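/- Dissipation identity for the weighted gradient: if m is smooth positive, then the 'carré du champ' part satisfies 2 ∇m · ∇(Δm)/m − Δ(‖∇m‖²/m) − Δm ‖∇m‖²/m² = −2 m ‖∇² log m‖² pointwise. -/

import Mathlib

open Real

/-- Partial derivative in direction `i`. -/
noncomputable def pd {n : ℕ} (i : Fin n) (g : (Fin n → ℝ) → ℝ) (x : Fin n → ℝ) : ℝ :=
  fderiv ℝ g x (Pi.single i 1)

section helpers
variable {n : ℕ}

lemma contDiff_pd {g : (Fin n → ℝ) → ℝ} (hg : ContDiff ℝ (⊤ : ℕ∞) g) (i : Fin n) :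
    ContDiff ℝ (⊤ : ℕ∞) (pd i g) := by
  have h := (ContinuousLinearMap.apply ℝ ℝ (Pi.single i (1:ℝ))).contDiff.comp
    (hg.fderiv_right (m := (⊤ : ℕ∞)) (by simp))
  exact h

lemma pd_sum {ι : Type*} (s : Finset ι) (f : ι → (Fin n → ℝ) → ℝ) (i : Fin n) (x : Fin n → ℝ)
    (h : ∀ j ∈ s, DifferentiableAt ℝ (f j) x) :
    pd i (fun y => ∑ j ∈ s, f j y) x = ∑ j ∈ s, pd i (f j) x := by
  unfold pd
  rw [fderiv_fun_sum h]
  simp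

lemma pd_mul {f g : (Fin n → ℝ) → ℝ} {x : Fin n → ℝ} (hf : DifferentiableAt ℝ f x)
    (hg : DifferentiableAt ℝ g x) (i : Fin n) :
    pd i (fun y => f y * g y) x = pd i f x * g x + f x * pd i g x := by
  unfold pd
  rw [fderiv_fun_mul hf hg]
  simp; ring

lemma pd_sub {f g : (Fin n → ℝ) → ℝ} {x : Fin n → ℝ} (hf : DifferentiableAt ℝ f x)
    (hg : DifferentiableAt ℝ g x) (i : Fin n) :
    pd i (fun y => f y - g y) x = pd i f x - pd i g x := by
  unfold pd
  rw [fderiv_fun_sub hf hg]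
  simp

lemma pd_const_mul {f : (Fin n → ℝ) → ℝ} {x : Fin n → ℝ} (hf : DifferentiableAt ℝ f x)
    (c : ℝ) (i : Fin n) :
    pd i (fun y => c * f y) x = c * pd i f x := by
  unfold pd
  rw [fderiv_const_mul hf c]
  simp

lemma pd_inv {g : (Fin n → ℝ) → ℝ} {x : Fin n → ℝ}
    (hg : DifferentiableAt ℝ g x) (hx : g x ≠ 0) (i : Fin n) :
    pd i (fun y => (g y)⁻¹) x = -pd i g x / g x ^ 2 := by
  unfold pd
  have h : HasFDerivAt (fun y => (g y)⁻¹) (-(g x ^ 2)⁻¹ • fderiv ℝ g x) x :=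
    (hasDerivAt_inv hx).comp_hasFDerivAt x hg.hasFDerivAt
  rw [h.fderiv]
  simp [div_eq_mul_inv]; ring

lemma pd_div {f g : (Fin n → ℝ) → ℝ} {x : Fin n → ℝ} (hf : DifferentiableAt ℝ f x)
    (hg : DifferentiableAt ℝ g x) (hx : g x ≠ 0) (i : Fin n) :
    pd i (fun y => f y / g y) x = (pd i f x * g x - f x * pd i g x) / g x ^ 2 := by
  have h1 : (fun y => f y / g y) = fun y => f y * (g y)⁻¹ := by
    funext y; rw [div_eq_mul_inv]
  rw [h1, pd_mul (g := fun y => (g y)⁻¹) hf (hg.inv hx), pd_inv hg hx]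
  field_simp
  ring

lemma pd_sq {f : (Fin n → ℝ) → ℝ} {x : Fin n → ℝ} (hf : DifferentiableAt ℝ f x) (i : Fin n) :
    pd i (fun y => f y ^ 2) x = 2 * f x * pd i f x := by
  have : (fun y => f y ^ 2) = fun y => f y * f y := by funext y; ring
  rw [this, pd_mul hf hf]; ring

lemma pd_log {m : (Fin n → ℝ) → ℝ} {x : Fin n → ℝ} (hm : DifferentiableAt ℝ m x)
    (hpos : m x ≠ 0) (i : Fin n) :
    pd i (fun y => Real.log (m y)) x = pd i m x / m x := by
  unfold pd
  have h : HasFDerivAt (fun y => Real.log (m y)) ((m x)⁻¹ • fderiv ℝ m x) x :=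
    (Real.hasDerivAt_log hpos).comp_hasFDerivAt x hm.hasFDerivAt
  rw [h.fderiv]
  simp [div_eq_inv_mul]

lemma pd_comm {m : (Fin n → ℝ) → ℝ} (hm : ContDiff ℝ (⊤ : ℕ∞) m) (i j : Fin n) (x : Fin n → ℝ) :
    pd i (pd j m) x = pd j (pd i m) x := by
  have hdm : Differentiable ℝ m := hm.differentiable (by simp)
  have h2 : DifferentiableAt ℝ (fderiv ℝ m) x :=
    ((hm.fderiv_right (m := (⊤ : ℕ∞)) (by simp)).differentiable (by simp)) x
  have hsym := second_derivative_symmetric (f' := fderiv ℝ m)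
    (fun y => (hdm y).hasFDerivAt) h2.hasFDerivAt (Pi.single i 1) (Pi.single j 1)
  have key : ∀ v : Fin n → ℝ,
      fderiv ℝ (fun y => fderiv ℝ m y v) x = (fderiv ℝ (fderiv ℝ m) x).flip v := by
    intro v
    rw [fderiv_clm_apply h2 (differentiableAt_const v)]
    simp
  unfold pd
  rw [key, key]
  simpa using hsym

lemma key_alg {n : ℕ} (M : ℝ) (hM : M ≠ 0) (a : Fin n → ℝ) (b T : Fin n → Fin n → ℝ) :
    2 * (∑ i, a i * ∑ j, T i j) / M
      - ∑ i, (2*(∑ j, b i j ^ 2)/M + 2*(∑ j, a j * T j i)/M - (∑ j, a j ^ 2)*b i i/M^2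
          - 4*a i*(∑ j, a j * b i j)/M^2 + 2*(∑ j, a j ^ 2)*a i^2/M^3)
      - (∑ i, b i i) * (∑ j, a j ^ 2) / M ^ 2
    = -2*M*∑ i, ∑ j, ((b i j * M - a j * a i)/M^2)^2 := by
  have step1 : 2 * (∑ i, a i * ∑ j, T i j) / M
      - ∑ i, (2*(∑ j, b i j ^ 2)/M + 2*(∑ j, a j * T j i)/M - (∑ j, a j ^ 2)*b i i/M^2
          - 4*a i*(∑ j, a j * b i j)/M^2 + 2*(∑ j, a j ^ 2)*a i^2/M^3)
      - (∑ i, b i i) * (∑ j, a j ^ 2) / M ^ 2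
      = ∑ i : Fin n, ∑ j : Fin n,
          (2*a i*T i j/M - 2*a j*T j i/M
            - 2*b i j^2/M + 4*a i*(a j*b i j)/M^2 - 2*a i^2*a j^2/M^3) := by
    have hA : 2 * (∑ i, a i * ∑ j, T i j) / M = ∑ i : Fin n, 2*a i*(∑ j, T i j)/M := by
      rw [Finset.mul_sum, Finset.sum_div]
      exact Finset.sum_congr rfl fun i _ => by ring
    have hC : (∑ i, b i i) * (∑ j, a j ^ 2) / M ^ 2
        = ∑ i : Fin n, b i i * (∑ j, a j ^ 2) / M ^ 2 := by
      rw [Finset.sum_mul, Finset.sum_div]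
    rw [hA, hC, ← Finset.sum_sub_distrib, ← Finset.sum_sub_distrib]
    refine Finset.sum_congr rfl fun i _ => ?_
    have : ∀ j : Fin n, 2*a i*T i j/M - 2*a j*T j i/M
            - 2*b i j^2/M + 4*a i*(a j*b i j)/M^2 - 2*a i^2*a j^2/M^3
        = (2*a i/M)*T i j + (-2/M)*(a j*T j i) + (-2/M)*(b i j^2)
            + (4*a i/M^2)*(a j*b i j) + (-2*a i^2/M^3)*(a j^2) := fun j => by ring
    rw [Finset.sum_congr rfl fun j _ => this j]
    simp only [Finset.sum_add_distrib, ← Finset.mul_sum]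
    ring
  rw [step1]
  have step2 : ∑ i : Fin n, ∑ j : Fin n, 2*a j*T j i/M
      = ∑ i : Fin n, ∑ j : Fin n, 2*a i*T i j/M := by
    exact Finset.sum_comm (f := fun x y => 2*a y*T y x/M)
  have split : ∑ i : Fin n, ∑ j : Fin n,
          (2*a i*T i j/M - 2*a j*T j i/M
            - 2*b i j^2/M + 4*a i*(a j*b i j)/M^2 - 2*a i^2*a j^2/M^3)
      = (∑ i : Fin n, ∑ j : Fin n, 2*a i*T i j/M)
        - (∑ i : Fin n, ∑ j : Fin n, 2*a j*T j i/M)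
        + ∑ i : Fin n, ∑ j : Fin n,
            (- 2*b i j^2/M + 4*a i*(a j*b i j)/M^2 - 2*a i^2*a j^2/M^3) := by
    simp only [← Finset.sum_add_distrib, ← Finset.sum_sub_distrib]
    exact Finset.sum_congr rfl fun i _ => Finset.sum_congr rfl fun j _ => by ring
  rw [split, step2, sub_self, zero_add, Finset.mul_sum]
  refine Finset.sum_congr rfl fun i _ => ?_
  rw [Finset.mul_sum]
  refine Finset.sum_congr rfl fun j _ => ?_
  field_simp
  ring

end helpers

/-- Dissipation identity:
`2 ∇m·∇(Δm)/m − Δ(‖∇m‖²/m) − Δm ‖∇m‖²/m² = −2 m ‖∇² log m‖²` pointwise. -/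
theorem carre_du_champ_dissipation {n : ℕ} (m : (Fin n → ℝ) → ℝ)
    (hm : ContDiff ℝ (⊤ : ℕ∞) m) (hpos : ∀ x, 0 < m x) (x : Fin n → ℝ) :
    2 * (∑ i : Fin n, pd i m x *
          pd i (fun y => ∑ j : Fin n, pd j (pd j m) y) x) / m x
      - ∑ i : Fin n, pd i (pd i (fun y => (∑ j : Fin n, (pd j m y) ^ 2) / m y)) x
      - (∑ i : Fin n, pd i (pd i m) x) * (∑ j : Fin n, (pd j m x) ^ 2) / (m x) ^ 2
    = -2 * m x *
        ∑ i : Fin n, ∑ j : Fin n, (pd i (pd j (fun y => Real.log (m y))) x) ^ 2 := by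
  classical
  have hd : Differentiable ℝ m := hm.differentiable (by simp)
  have hC1 : ∀ j : Fin n, ContDiff ℝ (⊤ : ℕ∞) (pd j m) := fun j => contDiff_pd hm j
  have hC2 : ∀ i j : Fin n, ContDiff ℝ (⊤ : ℕ∞) (pd i (pd j m)) := fun i j => contDiff_pd (hC1 j) i
  have hd1 : ∀ (j : Fin n) (y : Fin n → ℝ), DifferentiableAt ℝ (pd j m) y :=
    fun j y => (hC1 j).differentiable (by simp) y
  have hd2 : ∀ (i j : Fin n) (y : Fin n → ℝ), DifferentiableAt ℝ (pd i (pd j m)) y :=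
    fun i j y => (hC2 i j).differentiable (by simp) y
  have hMne : ∀ y, m y ≠ 0 := fun y => (hpos y).ne'
  -- Laplacian term
  have e1 : ∀ i : Fin n, pd i (fun y => ∑ j : Fin n, pd j (pd j m) y) x
      = ∑ j : Fin n, pd i (pd j (pd j m)) x := fun i =>
    pd_sum Finset.univ (fun j => pd j (pd j m)) i x (fun j _ => hd2 j j x)
  -- third derivative symmetry
  have hU : ∀ i j : Fin n, pd i (pd i (pd j m)) x = pd j (pd i (pd i m)) x := by
    intro i j
    have h1 : pd i (pd j m) = pd j (pd i m) := funext fun y => pd_comm hm i j y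
    rw [h1]
    exact pd_comm (hC1 i) i j x
  -- gradient of |∇m|²
  have hnum : ∀ (i : Fin n) (y : Fin n → ℝ),
      pd i (fun z => ∑ j : Fin n, (pd j m z) ^ 2) y
        = ∑ j : Fin n, 2 * pd j m y * pd i (pd j m) y := by
    intro i y
    have h := pd_sum Finset.univ (fun j => fun z => (pd j m z) ^ 2) i y
      (fun j _ => (hd1 j y).pow 2)
    exact h.trans (Finset.sum_congr rfl fun j _ => pd_sq (hd1 j y) i)
  have hgfun : ∀ i : Fin n, pd i (fun y => (∑ j : Fin n, (pd j m y) ^ 2) / m y)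
      = fun y => ((∑ j : Fin n, 2 * pd j m y * pd i (pd j m) y) * m y
          - (∑ j : Fin n, (pd j m y) ^ 2) * pd i m y) / m y ^ 2 := by
    intro i; funext y
    have hf : DifferentiableAt ℝ (fun z => ∑ j : Fin n, (pd j m z) ^ 2) y :=
      DifferentiableAt.fun_sum fun j _ => (hd1 j y).pow 2
    have h := pd_div hf (hd y) (hMne y) i
    rw [h, hnum i y]
  -- per-summand third-derivative expansion
  have hPmul : ∀ i j : Fin n, pd i (fun y => 2 * pd j m y * pd i (pd j m) y) x
      = 2 * pd i (pd j m) x * pd i (pd j m) x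
        + 2 * pd j m x * pd i (pd i (pd j m)) x := by
    intro i j
    have h1 : pd i (fun y => 2 * pd j m y * pd i (pd j m) y) x
        = pd i (fun y => 2 * pd j m y) x * pd i (pd j m) x
          + 2 * pd j m x * pd i (pd i (pd j m)) x :=
      pd_mul ((hd1 j x).const_mul 2) (hd2 i j x) i
    rw [pd_const_mul (hd1 j x) 2 i] at h1
    exact h1.trans (by ring)
  have hsum3 : ∀ i : Fin n,
      pd i (fun y => ∑ j : Fin n, 2 * pd j m y * pd i (pd j m) y) x
        = ∑ j : Fin n, (2 * pd i (pd j m) x * pd i (pd j m) x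
            + 2 * pd j m x * pd i (pd i (pd j m)) x) := by
    intro i
    have h := pd_sum Finset.univ (fun j => fun y => 2 * pd j m y * pd i (pd j m) y) i x
      (fun j _ => ((hd1 j x).const_mul 2).mul (hd2 i j x))
    exact h.trans (Finset.sum_congr rfl fun j _ => hPmul i j)
  -- main second-derivative computation
  have e2 : ∀ i : Fin n,
      pd i (pd i (fun y => (∑ j : Fin n, (pd j m y) ^ 2) / m y)) x
        = 2*(∑ j : Fin n, (pd i (pd j m) x) ^ 2)/m x
          + 2*(∑ j : Fin n, pd j m x * pd j (pd i (pd i m)) x)/m x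
          - (∑ j : Fin n, (pd j m x) ^ 2)*(pd i (pd i m) x)/(m x)^2
          - 4*(pd i m x)*(∑ j : Fin n, pd j m x * pd i (pd j m) x)/(m x)^2
          + 2*(∑ j : Fin n, (pd j m x) ^ 2)*(pd i m x)^2/(m x)^3 := by
    intro i
    rw [hgfun i]
    have hS1 : DifferentiableAt ℝ (fun y => ∑ j : Fin n, 2 * pd j m y * pd i (pd j m) y) x :=
      DifferentiableAt.fun_sum fun j _ => ((hd1 j x).const_mul 2).mul (hd2 i j x)
    have hS2 : DifferentiableAt ℝ (fun y => ∑ j : Fin n, (pd j m y) ^ 2) x :=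
      DifferentiableAt.fun_sum fun j _ => (hd1 j x).pow 2
    have hA : DifferentiableAt ℝ
        (fun y => (∑ j : Fin n, 2 * pd j m y * pd i (pd j m) y) * m y) x := hS1.mul (hd x)
    have hB : DifferentiableAt ℝ
        (fun y => (∑ j : Fin n, (pd j m y) ^ 2) * pd i m y) x := hS2.mul (hd1 i x)
    have hF : DifferentiableAt ℝ
        (fun y => (∑ j : Fin n, 2 * pd j m y * pd i (pd j m) y) * m y
          - (∑ j : Fin n, (pd j m y) ^ 2) * pd i m y) x := hA.sub hB
    have hG : DifferentiableAt ℝ (fun y => m y ^ 2) x := (hd x).pow 2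
    have hdiv : pd i (fun y => ((∑ j : Fin n, 2 * pd j m y * pd i (pd j m) y) * m y
          - (∑ j : Fin n, (pd j m y) ^ 2) * pd i m y) / m y ^ 2) x
        = (pd i (fun y => (∑ j : Fin n, 2 * pd j m y * pd i (pd j m) y) * m y
            - (∑ j : Fin n, (pd j m y) ^ 2) * pd i m y) x * (m x ^ 2)
          - ((∑ j : Fin n, 2 * pd j m x * pd i (pd j m) x) * m x
            - (∑ j : Fin n, (pd j m x) ^ 2) * pd i m x) * pd i (fun y => m y ^ 2) x)
          / (m x ^ 2) ^ 2 :=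
      pd_div hF hG (pow_ne_zero 2 (hMne x)) i
    rw [hdiv]
    have hFval : pd i (fun y => (∑ j : Fin n, 2 * pd j m y * pd i (pd j m) y) * m y
          - (∑ j : Fin n, (pd j m y) ^ 2) * pd i m y) x
        = ((∑ j : Fin n, (2 * pd i (pd j m) x * pd i (pd j m) x
              + 2 * pd j m x * pd i (pd i (pd j m)) x)) * m x
            + (∑ j : Fin n, 2 * pd j m x * pd i (pd j m) x) * pd i m x)
          - ((∑ j : Fin n, 2 * pd j m x * pd i (pd j m) x) * pd i m x
            + (∑ j : Fin n, (pd j m x) ^ 2) * pd i (pd i m) x) := by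
      have h0 := pd_sub hA hB i
      have hA' : pd i (fun y => (∑ j : Fin n, 2 * pd j m y * pd i (pd j m) y) * m y) x
          = pd i (fun y => ∑ j : Fin n, 2 * pd j m y * pd i (pd j m) y) x * m x
            + (∑ j : Fin n, 2 * pd j m x * pd i (pd j m) x) * pd i m x :=
        pd_mul hS1 (hd x) i
      have hB' : pd i (fun y => (∑ j : Fin n, (pd j m y) ^ 2) * pd i m y) x
          = pd i (fun y => ∑ j : Fin n, (pd j m y) ^ 2) x * pd i m x
            + (∑ j : Fin n, (pd j m x) ^ 2) * pd i (pd i m) x :=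
        pd_mul hS2 (hd1 i x) i
      rw [h0, hA', hB', hsum3 i, hnum i x]
    rw [hFval, pd_sq (hd x) i]
    have hsplit : ∑ j : Fin n, (2 * pd i (pd j m) x * pd i (pd j m) x
          + 2 * pd j m x * pd i (pd i (pd j m)) x)
        = 2*(∑ j : Fin n, (pd i (pd j m) x) ^ 2)
          + 2*(∑ j : Fin n, pd j m x * pd j (pd i (pd i m)) x) := by
      rw [Finset.sum_add_distrib, Finset.mul_sum, Finset.mul_sum]
      congr 1
      · exact Finset.sum_congr rfl fun j _ => by ring
      · exact Finset.sum_congr rfl fun j _ => by rw [hU i j]; ring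
    have hP : ∑ j : Fin n, 2 * pd j m x * pd i (pd j m) x
        = 2 * ∑ j : Fin n, pd j m x * pd i (pd j m) x := by
      rw [Finset.mul_sum]
      exact Finset.sum_congr rfl fun j _ => by ring
    rw [hsplit, hP]
    have hMx := hMne x
    field_simp
    ring
  -- log Hessian
  have e3 : ∀ i j : Fin n, pd i (pd j (fun y => Real.log (m y))) x
      = (pd i (pd j m) x * m x - pd j m x * pd i m x) / m x ^ 2 := by
    intro i j
    have hl : pd j (fun y => Real.log (m y)) = fun y => pd j m y / m y :=
      funext fun y => pd_log (hd y) (hMne y) j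
    rw [hl]
    exact pd_div (hd1 j x) (hd x) (hMne x) i
  simp only [e1, e2, e3]
  exact key_alg (m x) (hMne x) (fun k => pd k m x) (fun k l => pd k (pd l m) x)
    (fun k l => pd k (pd l (pd l m)) x)
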